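/- Let γ ∈ (0,1], σ > 3, α ∈ [0,1/2), θ₁ > 0 and C₀ > 0. There is a constant C > 0, depending only on γ, σ, α, θ₁ and C₀, with the following property. For each k ∈ ℤ³ with k ≠ 0 let K_k, a_k, w_k, ρ_k : [0,∞) → ℂ be continuous functions such that |K_k(τ)| ≤ C₀·exp(−θ₁·|k|·τ) for all τ ≥ 0 and such that for all t ≥ 0, ρ_k(t) = a_k(t) + ∫₀^t K_k(t−s)·a_k(s) ds − ∫₀^t K_k(t−s)·w_k(s) ds. Assume that for every s ≥ 0 the quantities F_a(s) := sup_{k ≠ 0} exp(z⟨k,ks⟩^γ)·⟨k,ks⟩^σ·|k|^{−α}·|a_k(s)| and F_w(s) := sup_{k ≠ 0} exp(z⟨k,ks⟩^γ)·⟨k,ks⟩^σ·|k|^{−α}·|w_k(s)| are finite, where z ∈ [0, θ₁/2]. Then for every t ≥ 0, sup_{k ≠ 0} exp(z⟨k,kt⟩^γ)·⟨k,kt⟩^σ·|k|^{−α}·|ρ_k(t)| ≤ C·sup_{0 ≤ s ≤ t} F_a(s) + C·sup_{0 ≤ s ≤ t} F_w(s). -/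

import Mathlib

/-- Euclidean norm of a lattice point `k ∈ ℤ³`, viewed as a vector of `ℝ³`. -/
noncomputable def knorm (k : Fin 3 → ℤ) : ℝ := Real.sqrt (∑ i, ((k i : ℝ)) ^ 2)

/-- Japanese bracket `⟨k, kt⟩ = √(1 + |k|² + |kt|²)`. -/
noncomputable def jb (k : Fin 3 → ℤ) (t : ℝ) : ℝ :=
  Real.sqrt (1 + (∑ i, ((k i : ℝ)) ^ 2) + (∑ i, (t * (k i : ℝ)) ^ 2))

/-- The weight `exp(z⟨k,kt⟩^γ)·⟨k,kt⟩^σ·|k|^{-α}` of the generator function `F`. -/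
noncomputable def W (γ σ α z t : ℝ) (k : Fin 3 → ℤ) : ℝ :=
  Real.exp (z * jb k t ^ γ) * jb k t ^ σ * knorm k ^ (-α)

/-!
Since `⟨k,kt⟩ ≤ ⟨k,ks⟩ + |k|(t - s)`, the weight at time `t` exceeds the weight at time `s ≤ t`
by at most `e^{θ₁/2 · (1 + |k|(t - s))}` from the Gevrey factor (subadditivity of `y ↦ y^γ` and
`z ≤ θ₁/2`) times `(1 + |k|(t - s))^σ ≲ e^{θ₁/4 · |k|(t - s)}` from the polynomial factor. The
kernel's decay `e^{-θ₁|k|(t - s)}` absorbs both and leaves `e^{-θ₁/4 · (t - s)}` (as `|k| ≥ 1`),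
whose integral over `[0, t]` is at most `4/θ₁`.
-/

open Real Set MeasureTheory

lemma Real.rpow_le_one_add {x γ : ℝ} (hx : 0 ≤ x) (hγ0 : 0 ≤ γ) (hγ1 : γ ≤ 1) :
    x ^ γ ≤ 1 + x := by
  rcases le_total x 1 with h | h
  · linarith [rpow_le_one hx h hγ0]
  · have := rpow_le_rpow_of_exponent_le h hγ1
    rw [rpow_one] at this
    linarith

lemma Real.exists_one_add_rpow_le_mul_exp {σ ε : ℝ} (hσ : 0 < σ) (hε : 0 < ε) :
    ∃ M > 0, ∀ x, 0 ≤ x → (1 + x) ^ σ ≤ M * exp (ε * x) := by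
  set c := ε / σ
  have hc : 0 < c := div_pos hε hσ
  refine ⟨(exp c / c) ^ σ, by positivity, fun x hx => ?_⟩
  -- `c (1 + x) ≤ exp (c (1 + x))`, raised to the power `σ = ε / c`.
  have hlin : 1 + x ≤ exp c / c * exp (c * x) := by
    rw [div_mul_eq_mul_div, le_div_iff₀ hc, ← exp_add]
    linarith [add_one_le_exp (c + c * x)]
  calc (1 + x) ^ σ ≤ (exp c / c * exp (c * x)) ^ σ := by gcongr
    _ = (exp c / c) ^ σ * exp (ε * x) := by
      rw [mul_rpow (by positivity) (exp_pos _).le, ← exp_mul]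
      congr 2
      simp only [c]
      field_simp

lemma Real.sqrt_add_sq_le_sqrt_add_sq_add_abs {a : ℝ} (ha : 0 ≤ a) (u v : ℝ) :
    √(a + u ^ 2) ≤ √(a + v ^ 2) + |u - v| := by
  have hv : |v| ≤ √(a + v ^ 2) := by
    rw [← sqrt_sq_eq_abs]; gcongr; linarith
  rw [sqrt_le_left (by positivity), add_sq, sq_sqrt (by positivity), sq_abs]
  nlinarith [abs_nonneg (u - v), le_abs_self (v * (u - v)), abs_mul v (u - v)]

lemma one_le_knorm {k : Fin 3 → ℤ} (hk : k ≠ 0) : 1 ≤ knorm k := by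
  obtain ⟨i, hi⟩ : ∃ i, k i ≠ 0 := by
    by_contra! h
    exact hk (funext h)
  have hki : (1 : ℝ) ≤ (k i : ℝ) ^ 2 := by
    have : (1 : ℤ) ≤ k i ^ 2 := by nlinarith [sq_pos_of_ne_zero hi]
    exact_mod_cast this
  rw [knorm, one_le_sqrt]
  exact hki.trans (Finset.single_le_sum (f := fun j => (k j : ℝ) ^ 2)
    (fun j _ => sq_nonneg _) (Finset.mem_univ i))

lemma one_le_jb (k : Fin 3 → ℤ) (t : ℝ) : 1 ≤ jb k t := by
  rw [jb, one_le_sqrt]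
  have h₁ : 0 ≤ ∑ i, (k i : ℝ) ^ 2 := by positivity
  have h₂ : 0 ≤ ∑ i, (t * k i : ℝ) ^ 2 := by positivity
  linarith

lemma jb_eq_sqrt (k : Fin 3 → ℤ) (t : ℝ) :
    jb k t = √(1 + knorm k ^ 2 + (t * knorm k) ^ 2) := by
  have hN : knorm k ^ 2 = ∑ i, (k i : ℝ) ^ 2 := sq_sqrt (by positivity)
  rw [jb, mul_pow, hN, Finset.mul_sum]
  simp only [mul_pow]

lemma jb_le_add (k : Fin 3 → ℤ) (s t : ℝ) : jb k t ≤ jb k s + knorm k * |t - s| := by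
  have hN : 0 ≤ knorm k := sqrt_nonneg _
  rw [jb_eq_sqrt, jb_eq_sqrt, ← abs_of_nonneg hN, ← abs_mul, abs_of_nonneg hN, mul_sub,
    mul_comm (knorm k) t, mul_comm (knorm k) s]
  exact sqrt_add_sq_le_sqrt_add_sq_add_abs (by positivity) _ _

lemma W_pos (γ σ α z t : ℝ) {k : Fin 3 → ℤ} (hk : k ≠ 0) : 0 < W γ σ α z t k := by
  have := (one_le_jb k t).trans_lt' one_pos
  have := (one_le_knorm hk).trans_lt' one_pos
  unfold W
  positivity

lemma exp_mul_rpow_mul_exp_le {a b x z γ σ θ M : ℝ} (hγ0 : 0 ≤ γ) (hγ1 : γ ≤ 1) (hσ : 0 ≤ σ)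
    (hz0 : 0 ≤ z) (hz : z ≤ θ / 2) (hM : (1 + x) ^ σ ≤ M * exp (θ / 4 * x))
    (ha : 1 ≤ a) (hb : 0 ≤ b) (hx : 0 ≤ x) (hab : b ≤ a + x) :
    exp (z * b ^ γ) * b ^ σ * exp (-θ * x) ≤
      exp (θ / 2) * M * exp (-(θ / 4) * x) * (exp (z * a ^ γ) * a ^ σ) := by
  have hexp : z * b ^ γ ≤ z * a ^ γ + θ / 2 * (1 + x) := by
    have : b ^ γ ≤ a ^ γ + (1 + x) :=
      calc b ^ γ ≤ (a + x) ^ γ := by gcongr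
        _ ≤ a ^ γ + x ^ γ := rpow_add_le_add_rpow (by linarith) hx hγ0 hγ1
        _ ≤ a ^ γ + (1 + x) := by gcongr; exact rpow_le_one_add hx hγ0 hγ1
    nlinarith
  have hpow : b ^ σ ≤ a ^ σ * (M * exp (θ / 4 * x)) :=
    calc b ^ σ ≤ (a * (1 + x)) ^ σ := by gcongr; nlinarith
      _ = a ^ σ * (1 + x) ^ σ := mul_rpow (by linarith) (by linarith)
      _ ≤ a ^ σ * (M * exp (θ / 4 * x)) := by gcongr
  have hexps : exp (z * a ^ γ + θ / 2 * (1 + x)) * exp (θ / 4 * x) * exp (-θ * x) =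
      exp (θ / 2) * exp (-(θ / 4) * x) * exp (z * a ^ γ) := by
    simp only [← exp_add]
    ring_nf
  calc exp (z * b ^ γ) * b ^ σ * exp (-θ * x)
      ≤ exp (z * a ^ γ + θ / 2 * (1 + x)) * (a ^ σ * (M * exp (θ / 4 * x))) * exp (-θ * x) := by
        gcongr
    _ = exp (θ / 2) * M * exp (-(θ / 4) * x) * (exp (z * a ^ γ) * a ^ σ) := by
        linear_combination (M * a ^ σ) * hexps

lemma exists_W_mul_exp_le {γ σ α θ : ℝ} (hγ0 : 0 ≤ γ) (hγ1 : γ ≤ 1) (hσ : 0 < σ) (hθ : 0 < θ) :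
    ∃ B > 0, ∀ z, 0 ≤ z → z ≤ θ / 2 → ∀ k : Fin 3 → ℤ, k ≠ 0 → ∀ s t, s ≤ t →
      W γ σ α z t k * exp (-θ * knorm k * (t - s)) ≤
        B * exp (-(θ / 4) * (t - s)) * W γ σ α z s k := by
  obtain ⟨M, hM0, hM⟩ := exists_one_add_rpow_le_mul_exp hσ (by positivity : 0 < θ / 4)
  refine ⟨exp (θ / 2) * M, by positivity, fun z hz0 hz k hk s t hst => ?_⟩
  have hN : 1 ≤ knorm k := one_le_knorm hk
  have hx : 0 ≤ knorm k * (t - s) := by nlinarith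
  have hjb := jb_le_add k s t
  rw [abs_of_nonneg (by linarith)] at hjb
  have key := exp_mul_rpow_mul_exp_le hγ0 hγ1 hσ.le hz0 hz (hM _ hx) (one_le_jb k s)
    (by linarith [one_le_jb k t]) hx hjb
  have hdecay : exp (-(θ / 4) * (knorm k * (t - s))) ≤ exp (-(θ / 4) * (t - s)) :=
    exp_le_exp.2 (by nlinarith [mul_le_mul_of_nonneg_right hN (sub_nonneg.2 hst)])
  have hNα : 0 ≤ knorm k ^ (-α) := rpow_nonneg (by linarith) _
  calc W γ σ α z t k * exp (-θ * knorm k * (t - s))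
      = exp (z * jb k t ^ γ) * jb k t ^ σ * exp (-θ * (knorm k * (t - s))) * knorm k ^ (-α) := by
        rw [W]; ring_nf
    _ ≤ exp (θ / 2) * M * exp (-(θ / 4) * (knorm k * (t - s))) *
          (exp (z * jb k s ^ γ) * jb k s ^ σ) * knorm k ^ (-α) :=
        mul_le_mul_of_nonneg_right key hNα
    _ ≤ exp (θ / 2) * M * exp (-(θ / 4) * (t - s)) *
          (exp (z * jb k s ^ γ) * jb k s ^ σ) * knorm k ^ (-α) := by
        have := (one_le_jb k s).trans_lt' one_pos
        gcongr
    _ = exp (θ / 2) * M * exp (-(θ / 4) * (t - s)) * W γ σ α z s k := by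
        rw [W]; ring

lemma integral_exp_neg_mul_sub {c : ℝ} (hc : c ≠ 0) (t : ℝ) :
    ∫ s in (0 : ℝ)..t, exp (-c * (t - s)) = (1 - exp (-c * t)) / c := by
  have : ∀ s, -c * (t - s) = c * s - c * t := fun s => by ring
  simp only [this, intervalIntegral.integral_comp_mul_sub (f := exp) hc, integral_exp]
  rw [smul_eq_mul, mul_zero, zero_sub, sub_self, exp_zero, neg_mul]
  field_simp

lemma mul_norm_integral_le_of_exp_decay {E : Type*} [NormedAddCommGroup E] [NormedSpace ℝ E]
    {g : ℝ → E} {w D c t : ℝ} (hw : 0 < w) (hD : 0 ≤ D) (hc : 0 < c) (ht : 0 ≤ t)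
    (hg : ∀ s ∈ Ioc 0 t, w * ‖g s‖ ≤ D * exp (-c * (t - s))) :
    w * ‖∫ s in (0 : ℝ)..t, g s‖ ≤ D / c := by
  have hbound : ∀ᵐ s ∂volume.restrict (uIoc 0 t), ‖g s‖ ≤ D / w * exp (-c * (t - s)) := by
    filter_upwards [MeasureTheory.ae_restrict_mem measurableSet_uIoc] with s hs
    rw [uIoc_of_le ht] at hs
    rw [div_mul_eq_mul_div, le_div_iff₀ hw, mul_comm]
    exact hg s hs
  have hint : IntervalIntegrable (fun s => D / w * exp (-c * (t - s))) volume 0 t := by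
    apply Continuous.intervalIntegrable
    fun_prop
  have hnorm := intervalIntegral.norm_integral_le_abs_of_norm_le hbound hint
  rw [intervalIntegral.integral_const_mul, integral_exp_neg_mul_sub hc.ne',
    abs_of_nonneg (by have := exp_le_one_iff.2 (by nlinarith : -c * t ≤ 0); positivity)] at hnorm
  calc w * ‖∫ s in (0 : ℝ)..t, g s‖ ≤ w * (D / w * ((1 - exp (-c * t)) / c)) := by gcongr
    _ ≤ D / c := by
      rw [← mul_assoc, mul_div_cancel₀ _ hw.ne', mul_div_assoc']
      gcongr
      exact mul_le_of_le_one_right hD (by linarith [exp_pos (-c * t)])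

lemma W_mul_norm_convolution_le {γ σ α θ C₀ B z t S : ℝ} (hθ : 0 < θ) (hB : 0 < B)
    {K f : ℝ → ℂ} {k : Fin 3 → ℤ} (hk : k ≠ 0) (ht : 0 ≤ t)
    (hWexp : ∀ s, s ≤ t → W γ σ α z t k * exp (-θ * knorm k * (t - s)) ≤
      B * exp (-(θ / 4) * (t - s)) * W γ σ α z s k)
    (hK : ∀ τ, 0 ≤ τ → ‖K τ‖ ≤ C₀ * exp (-θ * knorm k * τ))
    (hf : ∀ s ∈ Icc 0 t, W γ σ α z s k * ‖f s‖ ≤ S) :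
    W γ σ α z t k * ‖∫ s in (0 : ℝ)..t, K (t - s) * f s‖ ≤ 4 * C₀ * B * S / θ := by
  have hC₀ : 0 ≤ C₀ := by simpa using (norm_nonneg _).trans (hK 0 le_rfl)
  have hS : 0 ≤ S :=
    (mul_nonneg (W_pos γ σ α z t hk).le (norm_nonneg _)).trans (hf t ⟨ht, le_rfl⟩)
  have := mul_norm_integral_le_of_exp_decay (W_pos γ σ α z t hk)
    (by positivity : 0 ≤ C₀ * B * S) (by positivity : 0 < θ / 4) ht
    (g := fun s => K (t - s) * f s) fun s ⟨hs0, hst⟩ => ?_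
  · convert this using 1
    field_simp
  calc W γ σ α z t k * ‖K (t - s) * f s‖
      ≤ W γ σ α z t k * (C₀ * exp (-θ * knorm k * (t - s)) * ‖f s‖) := by
        rw [norm_mul]
        gcongr
        · exact (W_pos γ σ α z t hk).le
        · exact hK _ (by linarith)
    _ = C₀ * (W γ σ α z t k * exp (-θ * knorm k * (t - s))) * ‖f s‖ := by ring
    _ ≤ C₀ * (B * exp (-(θ / 4) * (t - s)) * W γ σ α z s k) * ‖f s‖ :=
        mul_le_mul_of_nonneg_right (mul_le_mul_of_nonneg_left (hWexp s hst) hC₀) (norm_nonneg _)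
    _ = C₀ * B * exp (-(θ / 4) * (t - s)) * (W γ σ α z s k * ‖f s‖) := by ring
    _ ≤ C₀ * B * exp (-(θ / 4) * (t - s)) * S := by
        gcongr
        exact hf s ⟨hs0.le, hst⟩
    _ = C₀ * B * S * exp (-(θ / 4) * (t - s)) := by ring

theorem linear_density_estimate_general {γ σ α θ₁ C₀ : ℝ} (hγ0 : 0 < γ) (hγ1 : γ ≤ 1)
    (hσ : 3 < σ) (hθ : 0 < θ₁) (hC₀ : 0 < C₀) :
    ∃ C : ℝ, 0 < C ∧
      ∀ (K a w ρ : (Fin 3 → ℤ) → ℝ → ℂ) (z : ℝ), 0 ≤ z → z ≤ θ₁ / 2 →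
        (∀ k : Fin 3 → ℤ, k ≠ 0 →
          ContinuousOn (K k) (Set.Ici 0) ∧ ContinuousOn (a k) (Set.Ici 0) ∧
            ContinuousOn (w k) (Set.Ici 0) ∧ ContinuousOn (ρ k) (Set.Ici 0)) →
        (∀ k : Fin 3 → ℤ, k ≠ 0 → ∀ τ : ℝ, 0 ≤ τ →
          ‖K k τ‖ ≤ C₀ * Real.exp (-θ₁ * knorm k * τ)) →
        (∀ k : Fin 3 → ℤ, k ≠ 0 → ∀ t : ℝ, 0 ≤ t →
          ρ k t = a k t + (∫ s in (0 : ℝ)..t, K k (t - s) * a k s) -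
            ∫ s in (0 : ℝ)..t, K k (t - s) * w k s) →
        ∀ t : ℝ, 0 ≤ t → ∀ Sa Sw : ℝ,
          (∀ s ∈ Set.Icc (0 : ℝ) t, ∀ k : Fin 3 → ℤ, k ≠ 0 →
            W γ σ α z s k * ‖a k s‖ ≤ Sa) →
          (∀ s ∈ Set.Icc (0 : ℝ) t, ∀ k : Fin 3 → ℤ, k ≠ 0 →
            W γ σ α z s k * ‖w k s‖ ≤ Sw) →
          ∀ k : Fin 3 → ℤ, k ≠ 0 →
            W γ σ α z t k * ‖ρ k t‖ ≤ C * Sa + C * Sw := by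
  obtain ⟨B, hB, hWexp⟩ := exists_W_mul_exp_le (α := α) hγ0.le hγ1 (by linarith : 0 < σ) hθ
  refine ⟨1 + 4 * C₀ * B / θ₁, by positivity, ?_⟩
  intro K a w ρ z hz0 hz _ hK hres t ht Sa Sw ha hw k hk
  have hconv (f : ℝ → ℂ) (S : ℝ) (hf : ∀ s ∈ Icc 0 t, W γ σ α z s k * ‖f s‖ ≤ S) :
      W γ σ α z t k * ‖∫ s in (0 : ℝ)..t, K k (t - s) * f s‖ ≤ 4 * C₀ * B / θ₁ * S :=
    (W_mul_norm_convolution_le hθ hB hk ht (fun s hst => hWexp z hz0 hz k hk s t hst) (hK k hk)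
      hf).trans_eq (by ring)
  have hWpos := W_pos γ σ α z t hk
  have hWa := ha t ⟨ht, le_rfl⟩ k hk
  have hSa : 0 ≤ Sa := (mul_nonneg hWpos.le (norm_nonneg _)).trans hWa
  have hSw : 0 ≤ Sw := (mul_nonneg hWpos.le (norm_nonneg _)).trans (hw t ⟨ht, le_rfl⟩ k hk)
  calc W γ σ α z t k * ‖ρ k t‖
      ≤ W γ σ α z t k * ‖a k t‖ + W γ σ α z t k * ‖∫ s in (0 : ℝ)..t, K k (t - s) * a k s‖ +
          W γ σ α z t k * ‖∫ s in (0 : ℝ)..t, K k (t - s) * w k s‖ := by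
        rw [hres k hk t ht, ← mul_add, ← mul_add]
        gcongr
        exact (norm_sub_le _ _).trans (by gcongr; exact norm_add_le _ _)
    _ ≤ Sa + 4 * C₀ * B / θ₁ * Sa + 4 * C₀ * B / θ₁ * Sw :=
        add_le_add_three hWa (hconv _ _ fun s hs => ha s hs k hk) (hconv _ _ fun s hs => hw s hs k hk)
    _ ≤ (1 + 4 * C₀ * B / θ₁) * Sa + (1 + 4 * C₀ * B / θ₁) * Sw := by nlinarith

/-- Linear density estimate: from the resolvent representation
`ρ_k(t) = a_k(t) + ∫₀^t K_k(t−s)a_k(s)ds − ∫₀^t K_k(t−s)w_k(s)ds` and the decay of `K_k`,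
the weighted sup of `ρ` is controlled by those of `a` and `w`. -/
theorem linear_density_estimate {γ σ α θ₁ C₀ : ℝ} (hγ0 : 0 < γ) (hγ1 : γ ≤ 1)
    (hσ : 3 < σ) (hα0 : 0 ≤ α) (hα : α < 1 / 2) (hθ : 0 < θ₁) (hC₀ : 0 < C₀) :
    ∃ C : ℝ, 0 < C ∧
      ∀ (K a w ρ : (Fin 3 → ℤ) → ℝ → ℂ) (z : ℝ), 0 ≤ z → z ≤ θ₁ / 2 →
        (∀ k : Fin 3 → ℤ, k ≠ 0 →
          ContinuousOn (K k) (Set.Ici 0) ∧ ContinuousOn (a k) (Set.Ici 0) ∧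
            ContinuousOn (w k) (Set.Ici 0) ∧ ContinuousOn (ρ k) (Set.Ici 0)) →
        (∀ k : Fin 3 → ℤ, k ≠ 0 → ∀ τ : ℝ, 0 ≤ τ →
          ‖K k τ‖ ≤ C₀ * Real.exp (-θ₁ * knorm k * τ)) →
        (∀ k : Fin 3 → ℤ, k ≠ 0 → ∀ t : ℝ, 0 ≤ t →
          ρ k t = a k t + (∫ s in (0 : ℝ)..t, K k (t - s) * a k s) -
            ∫ s in (0 : ℝ)..t, K k (t - s) * w k s) →
        ∀ t : ℝ, 0 ≤ t → ∀ Sa Sw : ℝ,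
          (∀ s ∈ Set.Icc (0 : ℝ) t, ∀ k : Fin 3 → ℤ, k ≠ 0 →
            W γ σ α z s k * ‖a k s‖ ≤ Sa) →
          (∀ s ∈ Set.Icc (0 : ℝ) t, ∀ k : Fin 3 → ℤ, k ≠ 0 →
            W γ σ α z s k * ‖w k s‖ ≤ Sw) →
          ∀ k : Fin 3 → ℤ, k ≠ 0 →
            W γ σ α z t k * ‖ρ k t‖ ≤ C * Sa + C * Sw :=
  linear_density_estimate_general hγ0 hγ1 hσ hθ hC₀
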